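/- arXiv:1706.07944 — 5 statements merged into one kernel-verified Lean document; each statement's English description precedes it below -/
import Mathlib

section
/- Let F = A^{1/m} be an m-th root Finsler metric on an open subset U ⊆ ℝⁿ such that for every x ∈ U the polynomial y ↦ A(x,y) is irreducible in ℝ[y¹,…,yⁿ]. If the S-curvature of F satisfies S(x,y) = (n+1)c(x)F(x,y) + η_i(x)y^i for some smooth scalar function c on U and some smooth 1-form η = η_i(x)y^i, then c ≡ 0; that is, S = η. Conversely, S = η trivially has this form with c = 0, so the two conditions are equivalent. -/
open scoped BigOperators
open Matrix

noncomputable section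

/-- Partial derivative of `f` in the `i`-th coordinate direction at `v`. -/
def pd {n : ℕ} (f : (Fin n → ℝ) → ℝ) (i : Fin n) (v : Fin n → ℝ) : ℝ :=
  fderiv ℝ f v (Pi.single i 1)

/-- `A(x,y) = a_{i₁⋯i_m}(x) y^{i₁}⋯y^{i_m}`. -/
def Amap {n m : ℕ} (a : (Fin m → Fin n) → (Fin n → ℝ) → ℝ) (x y : Fin n → ℝ) : ℝ :=
  ∑ ι : Fin m → Fin n, a ι x * ∏ k, y (ι k)

/-- Fundamental tensor `g_{ij} = ½ ∂²(F²)/∂y^i∂y^j`. -/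
def gmat {n : ℕ} (F : (Fin n → ℝ) → (Fin n → ℝ) → ℝ) (x y : Fin n → ℝ) :
    Matrix (Fin n) (Fin n) ℝ :=
  Matrix.of fun i j => (1/2) * pd (fun v => pd (fun w => (F x w)^2) j v) i y

/-- Spray coefficients `G^i = ¼ g^{il}[∂²(F²)/∂x^k∂y^l · y^k − ∂(F²)/∂x^l]`. -/
def sprayCoef {n : ℕ} (F : (Fin n → ℝ) → (Fin n → ℝ) → ℝ) (i : Fin n)
    (x y : Fin n → ℝ) : ℝ :=
  (1/4) * ∑ l, (gmat F x y)⁻¹ i l *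
    ((∑ k, pd (fun x' => pd (fun w => (F x' w)^2) l y) k x * y k)
      - pd (fun x' => (F x' y)^2) l x)

/-- S-curvature `S = ∂G^i/∂y^i − y^i ∂/∂x^i [ln √(det g)]`. -/
def Scurv {n : ℕ} (F : (Fin n → ℝ) → (Fin n → ℝ) → ℝ) (x y : Fin n → ℝ) : ℝ :=
  (∑ i, pd (fun v => sprayCoef F i x v) i y)
    - ∑ i, y i * pd (fun x' => Real.log (Real.sqrt ((gmat F x' y).det))) i x

lemma pd_comp_neg {n : ℕ} (f : (Fin n → ℝ) → ℝ) (i : Fin n) (v : Fin n → ℝ) :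
    pd (fun w => f (-w)) i v = - pd f i (-v) := by
  have h := (ContinuousLinearEquiv.neg ℝ (M := Fin n → ℝ)).comp_right_fderiv (f := f) (x := v)
  have he : (fun w : Fin n → ℝ => f (-w)) = f ∘ (ContinuousLinearEquiv.neg ℝ (M := Fin n → ℝ)) := rfl
  rw [pd, he, h]
  simp [pd, ContinuousLinearEquiv.neg_apply]

lemma pd_even {n : ℕ} {f : (Fin n → ℝ) → ℝ} (hf : ∀ w, f (-w) = f w) (i : Fin n) (v : Fin n → ℝ) :
    pd f i (-v) = - pd f i v := by
  have h := pd_comp_neg f i v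
  simp only [hf] at h
  linarith

lemma pd_of_neg {n : ℕ} (f : (Fin n → ℝ) → ℝ) (i : Fin n) (v : Fin n → ℝ) :
    pd (fun w => - f w) i v = - pd f i v := by
  simp [pd, fderiv_neg]

lemma pd_odd {n : ℕ} {f : (Fin n → ℝ) → ℝ} (hf : ∀ w, f (-w) = - f w) (i : Fin n) (v : Fin n → ℝ) :
    pd f i (-v) = pd f i v := by
  have h := pd_comp_neg f i v
  simp only [hf] at h
  have h2 := pd_of_neg f i v
  linarith

lemma Amap_neg {n m : ℕ} (a : (Fin m → Fin n) → (Fin n → ℝ) → ℝ) (x y : Fin n → ℝ) :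
    Amap a x (-y) = (-1 : ℝ)^m * Amap a x y := by
  unfold Amap
  rw [Finset.mul_sum]
  refine Finset.sum_congr rfl fun ι _ => ?_
  have : ∏ k : Fin m, (-y) (ι k) = (-1 : ℝ)^m * ∏ k : Fin m, y (ι k) := by
    have : ∀ k : Fin m, (-y) (ι k) = (-1 : ℝ) * y (ι k) := fun k => by simp
    rw [Finset.prod_congr rfl fun k _ => this k, Finset.prod_mul_distrib,
      Finset.prod_const, Finset.card_univ, Fintype.card_fin]
  rw [this]; ring

/-- an m-th root metric with almost isotropic S-curvature
`S = (n+1)cF + η` necessarily has `c ≡ 0`, i.e. `S = η`. -/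
theorem mth_root_almost_isotropic_S_curvature
    (n m : ℕ) (hn : 2 ≤ n) (hm : 3 ≤ m)
    (U : Set (Fin n → ℝ)) (hU : IsOpen U)
    (a : (Fin m → Fin n) → (Fin n → ℝ) → ℝ)
    (ha_smooth : ∀ ι, ContDiff ℝ (⊤:ℕ∞) (a ι))
    (ha_symm : ∀ (σ : Equiv.Perm (Fin m)) (ι : Fin m → Fin n) (x : Fin n → ℝ),
      a (ι ∘ σ) x = a ι x)
    (hApos : ∀ x ∈ U, ∀ y : Fin n → ℝ, y ≠ 0 → 0 < Amap a x y)
    (F : (Fin n → ℝ) → (Fin n → ℝ) → ℝ)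
    (hF : ∀ x y, F x y = (Amap a x y) ^ ((1:ℝ)/m))
    (hgpd : ∀ x ∈ U, ∀ y : Fin n → ℝ, y ≠ 0 → (gmat F x y).PosDef)
    (hirr : ∀ x ∈ U, ∃ P : MvPolynomial (Fin n) ℝ, Irreducible P ∧
      ∀ y : Fin n → ℝ, MvPolynomial.eval y P = Amap a x y)
    (c : (Fin n → ℝ) → ℝ) (hc : ContDiffOn ℝ (⊤:ℕ∞) c U)
    (η : Fin n → (Fin n → ℝ) → ℝ) (hη : ∀ i, ContDiffOn ℝ (⊤:ℕ∞) (η i) U)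
    (hS : ∀ x ∈ U, ∀ y : Fin n → ℝ, y ≠ 0 →
      Scurv F x y = (n + 1 : ℝ) * c x * F x y + ∑ i, η i x * y i) :
    (∀ x ∈ U, c x = 0) ∧
    (∀ x ∈ U, ∀ y : Fin n → ℝ, y ≠ 0 → Scurv F x y = ∑ i, η i x * y i) := by
  have hn0 : 0 < n := by omega
  set y₀ : Fin n → ℝ := Pi.single ⟨0, hn0⟩ 1 with hy₀def
  have hy₀ : y₀ ≠ 0 := by
    intro h
    have := congrFun h ⟨0, hn0⟩
    rw [hy₀def, Pi.single_eq_same] at this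
    simpa using this
  rcases Nat.even_or_odd m with hme | hmo
  · -- m even : F is even in y, S-curvature is odd in y
    have hmpow : (-1 : ℝ)^m = 1 := hme.neg_one_pow
    have hFneg : ∀ x y, F x (-y) = F x y := by
      intro x y; rw [hF, hF, Amap_neg, hmpow, one_mul]
    have hEneg : ∀ x : Fin n → ℝ, ∀ w, (F x (-w))^2 = (F x w)^2 := by
      intro x w; rw [hFneg]
    have hgneg : ∀ x y, gmat F x (-y) = gmat F x y := by
      intro x y
      ext i j
      show (1/2) * pd (fun v => pd (fun w => (F x w)^2) j v) i (-y)
        = (1/2) * pd (fun v => pd (fun w => (F x w)^2) j v) i y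
      congr 1
      exact pd_odd (fun v => pd_even (hEneg x) j v) i y
    have hGneg : ∀ i x y, sprayCoef F i x (-y) = sprayCoef F i x y := by
      intro i x y
      unfold sprayCoef
      rw [hgneg]
      congr 1
      refine Finset.sum_congr rfl fun l _ => ?_
      congr 1
      have h2 : pd (fun x' => (F x' (-y))^2) l x = pd (fun x' => (F x' y)^2) l x := by
        congr 1; funext x'; rw [hEneg]
      rw [h2]
      congr 1
      refine Finset.sum_congr rfl fun k _ => ?_
      have h1 : (fun x' => pd (fun w => (F x' w)^2) l (-y))
          = (fun x' => - pd (fun w => (F x' w)^2) l y) := by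
        funext x'; exact pd_even (hEneg x') l y
      rw [h1, pd_of_neg]
      simp only [Pi.neg_apply]
      ring
    have hSneg : ∀ x y, Scurv F x (-y) = - Scurv F x y := by
      intro x y
      unfold Scurv
      have h1 : ∀ i : Fin n, pd (fun v => sprayCoef F i x v) i (-y)
          = - pd (fun v => sprayCoef F i x v) i y := by
        intro i
        have heven : ∀ v, sprayCoef F i x (-v) = sprayCoef F i x v := fun v => hGneg i x v
        exact pd_even heven i y
      have h2 : ∀ i : Fin n, (-y) i * pd (fun x' => Real.log (Real.sqrt ((gmat F x' (-y)).det))) i x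
          = -(y i * pd (fun x' => Real.log (Real.sqrt ((gmat F x' y).det))) i x) := by
        intro i
        have : (fun x' => Real.log (Real.sqrt ((gmat F x' (-y)).det)))
            = (fun x' => Real.log (Real.sqrt ((gmat F x' y).det))) := by
          funext x'; rw [hgneg]
        rw [this, Pi.neg_apply]; ring
      rw [Finset.sum_congr rfl fun i _ => h1 i, Finset.sum_congr rfl fun i _ => h2 i,
        Finset.sum_neg_distrib, Finset.sum_neg_distrib]
      ring
    have hc0 : ∀ x ∈ U, c x = 0 := by
      intro x hx
      have hy₀' : -y₀ ≠ 0 := neg_ne_zero.mpr hy₀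
      have e1 := hS x hx y₀ hy₀
      have e2 := hS x hx (-y₀) hy₀'
      rw [hSneg, hFneg, e1] at e2
      have hsum : ∑ i, η i x * (-y₀) i = - ∑ i, η i x * y₀ i := by
        rw [← Finset.sum_neg_distrib]
        refine Finset.sum_congr rfl fun i _ => ?_
        rw [Pi.neg_apply]; ring
      rw [hsum] at e2
      have hkey : (n + 1 : ℝ) * c x * F x y₀ = 0 := by linarith
      have hFpos : 0 < F x y₀ := by
        rw [hF]; exact Real.rpow_pos_of_pos (hApos x hx y₀ hy₀) _
      have hn1 : (0 : ℝ) < (n : ℝ) + 1 := by positivity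
      rcases mul_eq_zero.mp hkey with h | h
      · rcases mul_eq_zero.mp h with h' | h'
        · linarith
        · exact h'
      · linarith
    refine ⟨hc0, fun x hx y hy => ?_⟩
    rw [hS x hx y hy, hc0 x hx]
    ring
  · -- m odd : positivity of A is contradictory
    have hmpow : (-1 : ℝ)^m = -1 := hmo.neg_one_pow
    have hFalse : ∀ x ∈ U, False := by
      intro x hx
      have h1 := hApos x hx y₀ hy₀
      have h2 := hApos x hx (-y₀) (neg_ne_zero.mpr hy₀)
      rw [Amap_neg, hmpow] at h2
      linarith
    exact ⟨fun x hx => (hFalse x hx).elim, fun x hx => (hFalse x hx).elim⟩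
end
end

section
/- Let F = A^{1/m} be an m-th root Finsler metric on an open subset U ⊆ ℝⁿ such that for every x ∈ U the polynomial y ↦ A(x,y) is irreducible in ℝ[y¹,…,yⁿ], and suppose F is non-Riemannian in the sense that for every x ∈ U the Cartan tensor C_{ijk}(x,·) is not identically zero. If F has isotropic Landsberg curvature, i.e. L_{ijk}(x,y) = c(x) F(x,y) C_{ijk}(x,y) for some smooth scalar function c on U, then c ≡ 0 and L = 0, i.e. F is a Landsberg metric. -/
open scoped BigOperators
open Matrix

noncomputable section

/-- Lowered index `y_j = g_{jl} y^l`. -/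
def lowerY {n : ℕ} (F : (Fin n → ℝ) → (Fin n → ℝ) → ℝ) (x y : Fin n → ℝ)
    (j : Fin n) : ℝ :=
  ∑ l, gmat F x y j l * y l

/-- Cartan tensor `C_{ijk} = ¼ ∂³(F²)/∂y^i∂y^j∂y^k`. -/
def Cartan {n : ℕ} (F : (Fin n → ℝ) → (Fin n → ℝ) → ℝ) (x y : Fin n → ℝ)
    (i j k : Fin n) : ℝ :=
  (1/4) * pd (fun u => pd (fun v => pd (fun w => (F x w)^2) k v) j u) i y

/-- Mean Cartan torsion `I_i = g^{jk} C_{ijk}`. -/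
def meanCartan {n : ℕ} (F : (Fin n → ℝ) → (Fin n → ℝ) → ℝ) (x y : Fin n → ℝ)
    (i : Fin n) : ℝ :=
  ∑ j, ∑ k, (gmat F x y)⁻¹ j k * Cartan F x y i j k

/-- Landsberg curvature `L_{ijk} = −½ y_s ∂³G^s/∂y^i∂y^j∂y^k`. -/
def Landsberg {n : ℕ} (F : (Fin n → ℝ) → (Fin n → ℝ) → ℝ) (x y : Fin n → ℝ)
    (i j k : Fin n) : ℝ :=
  -(1/2) * ∑ s, lowerY F x y s *
    pd (fun u => pd (fun v => pd (fun w => sprayCoef F s x w) k v) j u) i y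

/-- Mean Landsberg curvature `J_i = g^{jk} L_{ijk}`. -/
def meanLandsberg {n : ℕ} (F : (Fin n → ℝ) → (Fin n → ℝ) → ℝ) (x y : Fin n → ℝ)
    (i : Fin n) : ℝ :=
  ∑ j, ∑ k, (gmat F x y)⁻¹ j k * Landsberg F x y i j k

/-- derivative of pointwise negation -/
lemma pd_negfun {n : ℕ} (f : (Fin n → ℝ) → ℝ) (i : Fin n) (v : Fin n → ℝ) :
    pd (fun w => -(f w)) i v = - pd f i v := by
  simp [pd, fderiv_neg]

/-- derivative of an even function is odd -/
lemma pd_of_even {n : ℕ} (f : (Fin n → ℝ) → ℝ) (hf : ∀ w, f (-w) = f w)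
    (i : Fin n) (v : Fin n → ℝ) : pd f i (-v) = - pd f i v := by
  have h := pd_comp_neg f i v
  have h2 : (fun w => f (-w)) = f := funext hf
  rw [h2] at h
  linarith

/-- derivative of an odd function is even -/
lemma pd_of_odd {n : ℕ} (f : (Fin n → ℝ) → ℝ) (hf : ∀ w, f (-w) = -(f w))
    (i : Fin n) (v : Fin n → ℝ) : pd f i (-v) = pd f i v := by
  have h := pd_comp_neg f i v
  have h2 : (fun w => f (-w)) = (fun w => -(f w)) := funext hf
  rw [h2, pd_negfun] at h
  linarith

/-- a non-Riemannian m-th root metric with isotropic Landsberg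
curvature `L = cFC` necessarily has `c ≡ 0`, i.e. it is a Landsberg metric. -/
theorem mth_root_isotropic_Landsberg
    (n m : ℕ) (hn : 2 ≤ n) (hm : 3 ≤ m)
    (U : Set (Fin n → ℝ)) (hU : IsOpen U)
    (a : (Fin m → Fin n) → (Fin n → ℝ) → ℝ)
    (ha_smooth : ∀ ι, ContDiff ℝ (⊤:ℕ∞) (a ι))
    (ha_symm : ∀ (σ : Equiv.Perm (Fin m)) (ι : Fin m → Fin n) (x : Fin n → ℝ),
      a (ι ∘ σ) x = a ι x)
    (hApos : ∀ x ∈ U, ∀ y : Fin n → ℝ, y ≠ 0 → 0 < Amap a x y)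
    (F : (Fin n → ℝ) → (Fin n → ℝ) → ℝ)
    (hF : ∀ x y, F x y = (Amap a x y) ^ ((1:ℝ)/m))
    (hgpd : ∀ x ∈ U, ∀ y : Fin n → ℝ, y ≠ 0 → (gmat F x y).PosDef)
    (hirr : ∀ x ∈ U, ∃ P : MvPolynomial (Fin n) ℝ, Irreducible P ∧
      ∀ y : Fin n → ℝ, MvPolynomial.eval y P = Amap a x y)
    (hnonRiem : ∀ x ∈ U, ∃ y : Fin n → ℝ, y ≠ 0 ∧ ∃ i j k, Cartan F x y i j k ≠ 0)
    (c : (Fin n → ℝ) → ℝ) (hc : ContDiffOn ℝ (⊤:ℕ∞) c U)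
    (hL : ∀ x ∈ U, ∀ y : Fin n → ℝ, y ≠ 0 → ∀ i j k,
      Landsberg F x y i j k = c x * F x y * Cartan F x y i j k) :
    (∀ x ∈ U, c x = 0) ∧
    (∀ x ∈ U, ∀ y : Fin n → ℝ, y ≠ 0 → ∀ i j k, Landsberg F x y i j k = 0) := by
  have key : ∀ x ∈ U, c x = 0 := by
    intro x hx
    rcases Nat.even_or_odd m with hme | hmo
    · -- m even: use the symmetry y ↦ -y
      have hm1 : ((-1 : ℝ))^m = 1 := hme.neg_one_pow
      have hAe : ∀ x' w, Amap a x' (-w) = Amap a x' w := by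
        intro x' w; rw [Amap_neg, hm1, one_mul]
      have hFe : ∀ x' w, F x' (-w) = F x' w := by
        intro x' w; rw [hF, hF, hAe]
      have hF2e : ∀ (x' w : Fin n → ℝ), (F x' (-w))^2 = (F x' w)^2 := by
        intro x' w; rw [hFe]
      have s0 : ∀ (x' : Fin n → ℝ) (j : Fin n) (v : Fin n → ℝ),
          pd (fun w => (F x' w)^2) j (-v) = - pd (fun w => (F x' w)^2) j v :=
        fun x' j v => pd_of_even _ (hF2e x') j v
      have s1 : ∀ (x' : Fin n → ℝ) (i j : Fin n) (v : Fin n → ℝ),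
          pd (fun v' => pd (fun w => (F x' w)^2) j v') i (-v)
            = pd (fun v' => pd (fun w => (F x' w)^2) j v') i v :=
        fun x' i j v => pd_of_odd _ (s0 x' j) i v
      have gEven : ∀ (x' w : Fin n → ℝ), gmat F x' (-w) = gmat F x' w := by
        intro x' w
        ext i j
        simp only [gmat, Matrix.of_apply]
        rw [s1]
      have sprayEven : ∀ (s : Fin n) (w : Fin n → ℝ),
          sprayCoef F s x (-w) = sprayCoef F s x w := by
        intro s w
        unfold sprayCoef
        rw [gEven]
        congr 1
        refine Finset.sum_congr rfl fun l _ => ?_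
        congr 1
        congr 1
        · refine Finset.sum_congr rfl fun k _ => ?_
          have hfe : (fun x' => pd (fun v => (F x' v)^2) l (-w))
              = fun x' => -(pd (fun v => (F x' v)^2) l w) :=
            funext fun x' => s0 x' l w
          rw [hfe, pd_negfun]
          simp [mul_comm]
        · have h2 : (fun x' => (F x' (-w))^2) = fun x' => (F x' w)^2 :=
            funext fun x' => hF2e x' w
          rw [h2]
      have t1 : ∀ (s k : Fin n) (v : Fin n → ℝ),
          pd (fun w => sprayCoef F s x w) k (-v)
            = - pd (fun w => sprayCoef F s x w) k v :=
        fun s k v => pd_of_even _ (sprayEven s) k v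
      have t2 : ∀ (s j k : Fin n) (u : Fin n → ℝ),
          pd (fun v => pd (fun w => sprayCoef F s x w) k v) j (-u)
            = pd (fun v => pd (fun w => sprayCoef F s x w) k v) j u :=
        fun s j k u => pd_of_odd _ (t1 s k) j u
      have t3 : ∀ (s i j k : Fin n) (y : Fin n → ℝ),
          pd (fun u => pd (fun v => pd (fun w => sprayCoef F s x w) k v) j u) i (-y)
            = - pd (fun u => pd (fun v => pd (fun w => sprayCoef F s x w) k v) j u) i y :=
        fun s i j k y => pd_of_even _ (t2 s j k) i y
      have lY : ∀ (y : Fin n → ℝ) (s : Fin n),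
          lowerY F x (-y) s = - lowerY F x y s := by
        intro y s
        unfold lowerY
        rw [gEven]
        simp [mul_neg]
      have Le : ∀ (y : Fin n → ℝ) (i j k : Fin n),
          Landsberg F x (-y) i j k = Landsberg F x y i j k := by
        intro y i j k
        unfold Landsberg
        congr 1
        refine Finset.sum_congr rfl fun s _ => ?_
        rw [lY, t3]
        ring
      have Ce : ∀ (y : Fin n → ℝ) (i j k : Fin n),
          Cartan F x (-y) i j k = - Cartan F x y i j k := by
        intro y i j k
        unfold Cartan
        rw [pd_of_even _ (fun u => s1 x j k u) i y]
        ring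
      obtain ⟨y0, hy0, i, j, k, hC⟩ := hnonRiem x hx
      have e1 := hL x hx y0 hy0 i j k
      have e2 := hL x hx (-y0) (neg_ne_zero.mpr hy0) i j k
      rw [Le, Ce, hFe, mul_neg] at e2
      have hz : c x * F x y0 * Cartan F x y0 i j k = 0 := by linarith
      have hFpos : 0 < F x y0 := by
        rw [hF]; exact Real.rpow_pos_of_pos (hApos x hx y0 hy0) _
      rcases mul_eq_zero.mp hz with h | h
      · rcases mul_eq_zero.mp h with h' | h'
        · exact h'
        · exact absurd h' (ne_of_gt hFpos)
      · exact absurd h hC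
    · -- m odd: contradicts positivity of A
      exfalso
      have hn0 : 0 < n := by omega
      set y : Fin n → ℝ := Pi.single ⟨0, hn0⟩ 1 with hy_def
      have hy : y ≠ 0 := by
        intro h
        have := congrFun h ⟨0, hn0⟩
        simp [hy_def] at this
      have h1 := hApos x hx y hy
      have h2 := hApos x hx (-y) (neg_ne_zero.mpr hy)
      rw [Amap_neg, hmo.neg_one_pow] at h2
      linarith
  refine ⟨key, fun x hx y hy i j k => ?_⟩
  rw [hL x hx y hy i j k, key x hx]
  ring
end
end

section
/- Let m > 2 be an integer, let A ∈ ℝ[y¹,…,yⁿ] be a nonconstant irreducible polynomial, and let W be a nonempty open subset of {y ∈ ℝⁿ : A(y) > 0}. If Φ, Ψ, Θ ∈ ℝ[y¹,…,yⁿ] satisfy Φ(y)·A(y)^{(2/m)−2} + Ψ(y)·A(y)^{(1/m)−1} + Θ(y) = 0 for all y ∈ W, then Φ = Ψ = Θ = 0 (as polynomials). -/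
open scoped BigOperators
open Matrix

noncomputable section

/-!
Multiplying by `A²` and writing `u = A^{1/m}`, the hypothesis says that at every point of `W`
the real number `u` is a common root of `X^m - A` and of `g = Φ X² + Ψ A X + Θ A²`, both with
coefficients evaluated there. By Eisenstein at the prime `A` and Gauss's lemma, `X^m - A` is
irreducible over the fraction field of `ℝ[y]`, so if `g ≠ 0` (of degree `≤ 2 < m`) the two are
coprime there and their resultant is a nonzero polynomial in `y`. Being a combination of the two
polynomials, the resultant vanishes at every point of the open set `W`, which is impossible.
Hence `g = 0`, and its coefficients vanish.
-/

open Polynomial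

namespace Polynomial

theorem irreducible_X_pow_sub_C_of_prime {R : Type*} [CommRing R] [IsDomain R] {p : R}
    (hp : Prime p) {m : ℕ} (hm : m ≠ 0) : Irreducible (X ^ m - C p) := by
  have hmonic : (X ^ m - C p).Monic := monic_X_pow_sub_C p hm
  have hdeg : (X ^ m - C p).natDegree = m := natDegree_X_pow_sub_C
  refine IsEisensteinAt.irreducible (𝓟 := Ideal.span {p}) ?_
    ((Ideal.span_singleton_prime hp.ne_zero).mpr hp) hmonic.isPrimitive (by omega)
  refine hmonic.isEisensteinAt_of_mem_of_notMem ?_ (fun {k} hk => ?_) ?_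
  · rw [Ne, Ideal.span_singleton_eq_top]; exact hp.not_isUnit
  · rw [hdeg] at hk
    rcases eq_or_ne k 0 with rfl | hk0
    · simp [Ne.symm hm]
    · simp [coeff_X_pow, coeff_C, hk.ne, hk0]
  · rw [Ideal.span_singleton_pow, Ideal.mem_span_singleton]
    simp only [coeff_sub, coeff_X_pow, coeff_C_zero, if_neg (Ne.symm hm), zero_sub, dvd_neg]
    intro hsq
    exact hp.not_isUnit (isUnit_of_dvd_one ((mul_dvd_mul_iff_left hp.ne_zero).mp
      (by simpa [sq] using hsq)))

theorem isCoprime_of_irreducible_of_natDegree_lt {K : Type*} [Field K] {f g : K[X]}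
    (hf : Irreducible f) (hg : g ≠ 0) (hdeg : g.natDegree < f.natDegree) : IsCoprime f g :=
  hf.coprime_iff_not_dvd.mpr fun hdvd => (natDegree_le_of_dvd hdvd hg).not_gt hdeg

theorem C_mul_X_sq_add_C_mul_X_add_C_eq_zero_iff {R : Type*} [Semiring R] {a b c : R} :
    C a * X ^ 2 + C b * X + C c = 0 ↔ a = 0 ∧ b = 0 ∧ c = 0 := by
  refine ⟨fun h => ⟨?_, ?_, ?_⟩, fun ⟨ha, hb, hc⟩ => by simp [ha, hb, hc]⟩
  · simpa using congrArg (coeff · 2) h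
  · simpa using congrArg (coeff · 1) h
  · simpa using congrArg (coeff · 0) h

theorem resultant_ne_zero_of_isCoprime_map {R S : Type*} [CommRing R] [CommRing S] [IsDomain S]
    {φ : R →+* S} (hφ : Function.Injective φ) {f g : R[X]}
    (h : IsCoprime (f.map φ) (g.map φ)) : resultant f g ≠ 0 := by
  have := resultant_ne_zero _ _ h
  rwa [natDegree_map_eq_of_injective hφ, natDegree_map_eq_of_injective hφ, resultant_map_map,
    map_ne_zero_iff _ hφ] at this

theorem map_resultant_eq_zero_of_eval₂_eq_zero {R S : Type*} [CommRing R] [CommRing S]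
    (φ : R →+* S) {u : S} {f g : R[X]} (hf : f.eval₂ φ u = 0) (hg : g.eval₂ φ u = 0)
    (hdeg : f.natDegree ≠ 0 ∨ g.natDegree ≠ 0) : φ (resultant f g) = 0 := by
  obtain ⟨p, q, -, -, hpq⟩ := exists_mul_add_mul_eq_C_resultant f g le_rfl le_rfl hdeg
  simpa [hf, hg] using congrArg (eval₂ φ u) hpq.symm

end Polynomial

namespace MvPolynomial

theorem eq_zero_of_eval_eq_zero_on_isOpen {σ : Type*} [Fintype σ] {p : MvPolynomial σ ℝ}
    {W : Set (σ → ℝ)} (hW : IsOpen W) (hne : W.Nonempty) (h : ∀ y ∈ W, eval y p = 0) :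
    p = 0 := by
  obtain ⟨x, hx⟩ := hne
  obtain ⟨ε, hε, hball⟩ := Metric.isOpen_iff.mp hW x hx
  refine funext_set (fun i => Metric.ball (x i) ε) (fun i => ?_) fun y hy => ?_
  · rw [Real.ball_eq_Ioo]; exact Set.Ioo_infinite (by linarith)
  · rw [map_zero]; exact h y (hball (by rwa [ball_pi x hε]))

theorem polynomial_eq_zero_of_common_roots {σ : Type*} [Fintype σ]
    {W : Set (σ → ℝ)} (hW : IsOpen W) (hne : W.Nonempty) {f g : (MvPolynomial σ ℝ)[X]}
    (hf : Irreducible (f.map (algebraMap _ (FractionRing (MvPolynomial σ ℝ)))))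
    (hdeg : g.natDegree < f.natDegree) (u : (σ → ℝ) → ℝ)
    (hfu : ∀ y ∈ W, f.eval₂ (eval y) (u y) = 0)
    (hgu : ∀ y ∈ W, g.eval₂ (eval y) (u y) = 0) :
    g = 0 := by
  by_contra hg
  have hinj := IsFractionRing.injective (MvPolynomial σ ℝ) (FractionRing (MvPolynomial σ ℝ))
  have hcop : IsCoprime (f.map (algebraMap _ _)) (g.map (algebraMap _ _)) :=
    isCoprime_of_irreducible_of_natDegree_lt hf ((Polynomial.map_ne_zero_iff hinj).mpr hg)
      (by rwa [natDegree_map_eq_of_injective hinj, natDegree_map_eq_of_injective hinj])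
  refine resultant_ne_zero_of_isCoprime_map hinj hcop
    (eq_zero_of_eval_eq_zero_on_isOpen hW hne fun y hy => ?_)
  exact map_resultant_eq_zero_of_eval₂_eq_zero (eval y) (hfu y hy) (hgu y hy) (.inl (by omega))

end MvPolynomial

theorem Real.quadratic_rpow_one_div_eq {a : ℝ} (ha : 0 < a) (c x y z : ℝ) :
    x * (a ^ (1 / c)) ^ 2 + y * a * a ^ (1 / c) + z * a ^ 2
      = (x * a ^ (2 / c - 2) + y * a ^ (1 / c - 1) + z) * a ^ 2 := by
  have h2 : a ^ (2 / c - 2) * a ^ 2 = (a ^ (1 / c)) ^ 2 := by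
    rw [← Real.rpow_natCast, ← Real.rpow_natCast, ← Real.rpow_add ha, ← Real.rpow_mul ha.le]
    congr 1; push_cast; ring
  have h1 : a ^ (1 / c - 1) * a ^ 2 = a * a ^ (1 / c) := by
    rw [← Real.rpow_natCast, ← Real.rpow_add ha,
      show 1 / c - 1 + ((2 : ℕ) : ℝ) = 1 / c + 1 by push_cast; ring,
      Real.rpow_add ha, Real.rpow_one, mul_comm]
  linear_combination (-x) * h2 - y * h1

theorem rational_irrational_independence_general
    (n m : ℕ) (hm : 2 < m)
    (A : MvPolynomial (Fin n) ℝ) (hAirr : Irreducible A)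
    (W : Set (Fin n → ℝ)) (hW : IsOpen W) (hWne : W.Nonempty)
    (hWA : ∀ y ∈ W, 0 < MvPolynomial.eval y A)
    (Φ Ψ Θ : MvPolynomial (Fin n) ℝ)
    (h : ∀ y ∈ W,
      MvPolynomial.eval y Φ * (MvPolynomial.eval y A) ^ ((2:ℝ)/(m:ℝ) - 2)
        + MvPolynomial.eval y Ψ * (MvPolynomial.eval y A) ^ ((1:ℝ)/(m:ℝ) - 1)
        + MvPolynomial.eval y Θ = 0) :
    Φ = 0 ∧ Ψ = 0 ∧ Θ = 0 := by
  have hmonic : (X ^ m - C A).Monic := monic_X_pow_sub_C A (by omega)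
  have hquad : C Φ * X ^ 2 + C (Ψ * A) * X + C (Θ * A ^ 2) = 0 := by
    refine MvPolynomial.polynomial_eq_zero_of_common_roots hW hWne
      (hmonic.irreducible_iff_irreducible_map_fraction_map.mp
        (irreducible_X_pow_sub_C_of_prime hAirr.prime (by omega)))
      (natDegree_quadratic_le.trans_lt (by rw [natDegree_X_pow_sub_C]; exact hm))
      (fun y => MvPolynomial.eval y A ^ ((1 : ℝ) / m)) (fun y hy => ?_) (fun y hy => ?_)
    · simp [one_div, Real.rpow_inv_natCast_pow (hWA y hy).le (by omega : m ≠ 0)]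
    · have := Real.quadratic_rpow_one_div_eq (hWA y hy) m (MvPolynomial.eval y Φ)
        (MvPolynomial.eval y Ψ) (MvPolynomial.eval y Θ)
      rw [h y hy, zero_mul] at this
      simpa only [eval₂_add, eval₂_mul, eval₂_C, eval₂_X, eval₂_X_pow, eval₂_pow, map_mul,
        map_pow, one_div] using this
  simpa [hAirr.ne_zero] using C_mul_X_sq_add_C_mul_X_add_C_eq_zero_iff.mp hquad

/-- if `Φ·A^{(2/m)−2} + Ψ·A^{(1/m)−1} + Θ = 0` on a nonempty open
set where the nonconstant irreducible polynomial `A` is positive, and `m > 2`,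
then `Φ = Ψ = Θ = 0`. -/
theorem rational_irrational_independence
    (n m : ℕ) (hm : 2 < m)
    (A : MvPolynomial (Fin n) ℝ) (hAirr : Irreducible A) (hAnc : 0 < A.totalDegree)
    (W : Set (Fin n → ℝ)) (hW : IsOpen W) (hWne : W.Nonempty)
    (hWA : ∀ y ∈ W, 0 < MvPolynomial.eval y A)
    (Φ Ψ Θ : MvPolynomial (Fin n) ℝ)
    (h : ∀ y ∈ W,
      MvPolynomial.eval y Φ * (MvPolynomial.eval y A) ^ ((2:ℝ)/(m:ℝ) - 2)
        + MvPolynomial.eval y Ψ * (MvPolynomial.eval y A) ^ ((1:ℝ)/(m:ℝ) - 1)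
        + MvPolynomial.eval y Θ = 0) :
    Φ = 0 ∧ Ψ = 0 ∧ Θ = 0 :=
  rational_irrational_independence_general n m hm A hAirr W hW hWne hWA Φ Ψ Θ h
end
end

section
/- Let m ≥ 3 be an integer and let A be a smooth positive function on an open cone C ⊆ ℝⁿ∖{0} that is positively homogeneous of degree m (A(λy) = λᵐA(y) for all λ > 0), and suppose the Hessian matrix (A_{ij}) = (∂²A/∂y^i∂y^j) is invertible on C, with inverse (A^{ij}). Set F = A^{1/m} and g_{ij} = ½ ∂²(F²)/∂y^i∂y^j. Then: (a) g_{ij} = (A^{(2/m)−2}/m²)[mA·A_{ij} + (2−m)A_iA_j], where A_i = ∂A/∂y^i; and (b) the matrix (g_{ij}) is invertible with inverse g^{ij} = A^{−2/m}[mA·A^{ij} + ((m−2)/(m−1)) y^i y^j]. -/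
/-!
Part (a) is the chain rule for `F² = A^{2/m}`, whose Hessian is
`(2/m) A^{2/m-1} A_{ij} + (2/m)(2/m-1) A^{2/m-2} A_i A_j`.
For part (b), Euler's identity applied to `A` and to its partial derivatives gives
`A_i y^i = m A` and `y^i A_{ij} = (m-1) A_j`, i.e. `A^{ij} A_j = y^i/(m-1)`. Multiplying out
`(mA·A^{-1} + (m-2)/(m-1)·y yᵀ)(mA·A_{··} + (2-m)·∇A ∇Aᵀ)`, every cross term is a multiple of
`y ∇Aᵀ`, and their coefficients cancel, leaving `(mA)²·1`.
-/

open scoped BigOperators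
open Matrix

noncomputable section

open Topology

section Homogeneous

variable {E F : Type*} [NormedAddCommGroup E] [NormedSpace ℝ E]
  [NormedAddCommGroup F] [NormedSpace ℝ F] {f : E → F} {C : Set E} {k : ℕ}

def IsPosHomogeneousOn (f : E → F) (C : Set E) (k : ℕ) : Prop :=
  ∀ y ∈ C, ∀ t : ℝ, 0 < t → f (t • y) = t ^ k • f y

theorem IsPosHomogeneousOn.fderiv_apply_self (hf : IsPosHomogeneousOn f C k) {y : E} (hy : y ∈ C)
    (hfy : DifferentiableAt ℝ f y) :
    fderiv ℝ f y y = (k : ℝ) • f y := by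
  have hray : HasDerivAt (fun t : ℝ => f (t • y)) (fderiv ℝ f y y) 1 := by
    have hfy' : HasFDerivAt f (fderiv ℝ f y) ((1 : ℝ) • y) := by simpa using hfy.hasFDerivAt
    simpa [Function.comp_def] using
      hfy'.comp_hasDerivAt (1 : ℝ) ((hasDerivAt_id (1 : ℝ)).smul_const y)
  have hpow : HasDerivAt (fun t : ℝ => f (t • y)) ((k : ℝ) • f y) 1 := by
    refine ((hasDerivAt_pow k (1 : ℝ)).smul_const (f y)).congr_of_eventuallyEq ?_ |>.congr_deriv
      (by simp)
    filter_upwards [eventually_gt_nhds zero_lt_one] with t ht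
    exact hf y hy t ht
  exact hray.unique hpow

theorem IsPosHomogeneousOn.fderiv (hf : IsPosHomogeneousOn f C (k + 1)) (hC : IsOpen C)
    (hcone : ∀ y ∈ C, ∀ t : ℝ, 0 < t → t • y ∈ C) (hfC : DifferentiableOn ℝ f C) :
    IsPosHomogeneousOn (_root_.fderiv ℝ f) C k := by
  intro y hy t ht
  have hscaled : HasFDerivAt (fun w => f (t • w)) (t • _root_.fderiv ℝ f (t • y)) y := by
    have := ((hfC _ (hcone y hy t ht)).differentiableAt
      (hC.mem_nhds (hcone y hy t ht))).hasFDerivAt.comp y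
      ((hasFDerivAt_id y).const_smul t)
    simpa [Function.comp_def, ContinuousLinearMap.comp_smul] using this
  have hpow : HasFDerivAt (fun w => f (t • w)) (t ^ (k + 1) • _root_.fderiv ℝ f y) y := by
    refine ((hfC y hy).differentiableAt (hC.mem_nhds hy)).hasFDerivAt.const_smul (t ^ (k + 1))
      |>.congr_of_eventuallyEq ?_
    filter_upwards [hC.mem_nhds hy] with w hw
    exact hf w hw t ht
  have := hscaled.unique hpow
  rw [pow_succ', mul_smul] at this
  exact smul_right_injective _ ht.ne' this

end Homogeneous

section Coordinates

variable {n : ℕ} {f : (Fin n → ℝ) → ℝ} {C : Set (Fin n → ℝ)} {y : Fin n → ℝ} {k : ℕ}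

theorem fderiv_apply_eq_sum_pd (f : (Fin n → ℝ) → ℝ) (y v : Fin n → ℝ) :
    fderiv ℝ f y v = ∑ i, v i * pd f i y := by
  conv_lhs => rw [pi_eq_sum_univ' v]
  simp [map_sum, pd]

theorem IsPosHomogeneousOn.sum_mul_pd (hf : IsPosHomogeneousOn f C k) (hy : y ∈ C)
    (hfy : DifferentiableAt ℝ f y) :
    ∑ i, y i * pd f i y = k * f y := by
  rw [← fderiv_apply_eq_sum_pd, hf.fderiv_apply_self hy hfy, smul_eq_mul]

theorem IsPosHomogeneousOn.pd (hf : IsPosHomogeneousOn f C (k + 1)) (hC : IsOpen C)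
    (hcone : ∀ y ∈ C, ∀ t : ℝ, 0 < t → t • y ∈ C) (hfC : DifferentiableOn ℝ f C) (j : Fin n) :
    IsPosHomogeneousOn (fun v => _root_.pd f j v) C k := by
  intro y hy t ht
  simp only [_root_.pd, hf.fderiv hC hcone hfC y hy t ht, _root_.smul_apply]

theorem pd_pd_eq_fderiv_fderiv (hf : DifferentiableAt ℝ (fderiv ℝ f) y) (i j : Fin n) :
    pd (fun v => pd f j v) i y = fderiv ℝ (fderiv ℝ f) y (Pi.single i 1) (Pi.single j 1) := by
  simp only [pd]
  rw [fderiv_clm_apply hf (differentiableAt_const _)]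
  simp

theorem ContDiffAt.differentiableAt_pd (hf : ContDiffAt ℝ 2 f y) (j : Fin n) :
    DifferentiableAt ℝ (fun v => pd f j v) y :=
  ((hf.fderiv_right le_rfl).differentiableAt one_ne_zero).clm_apply (differentiableAt_const _)

theorem Filter.EventuallyEq.pd_pd_eq {f' : (Fin n → ℝ) → ℝ} (h : f =ᶠ[𝓝 y] f') (i j : Fin n) :
    pd (fun v => pd f j v) i y = pd (fun v => pd f' j v) i y := by
  have hpd : (fun v => pd f j v) =ᶠ[𝓝 y] fun v => pd f' j v := by
    filter_upwards [h.fderiv (𝕜 := ℝ)] with v hv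
    simp only [pd, hv]
  simp only [pd] at hpd ⊢
  rw [hpd.fderiv_eq]

theorem pd_pd_comm (hf : ContDiffAt ℝ 2 f y) (i j : Fin n) :
    pd (fun v => pd f j v) i y = pd (fun v => pd f i v) j y := by
  have hd : DifferentiableAt ℝ (fderiv ℝ f) y :=
    (hf.fderiv_right le_rfl).differentiableAt one_ne_zero
  rw [pd_pd_eq_fderiv_fderiv hd, pd_pd_eq_fderiv_fderiv hd]
  exact hf.isSymmSndFDerivAt (by simp) _ _

theorem pd_rpow {v : Fin n → ℝ} (hf : DifferentiableAt ℝ f v) (hpos : 0 < f v) (p : ℝ)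
    (j : Fin n) :
    pd (fun w => f w ^ p) j v = p * f v ^ (p - 1) * pd f j v := by
  rw [pd, (hf.hasFDerivAt.rpow_const (p := p) (Or.inl hpos.ne')).fderiv]
  simp [pd]

theorem pd_pd_rpow (hf : ContDiffAt ℝ 2 f y) (hpos : 0 < f y) (p : ℝ) (i j : Fin n) :
    pd (fun v => pd (fun w => f w ^ p) j v) i y =
      p * (f y ^ (p - 1) * pd (fun v => pd f j v) i y
        + (p - 1) * f y ^ (p - 2) * pd f i y * pd f j y) := by
  have hnear : (fun v => pd (fun w => f w ^ p) j v) =ᶠ[𝓝 y]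
      fun v => p * (f v ^ (p - 1) * pd f j v) := by
    filter_upwards [hf.eventually (by simp), hf.continuousAt.eventually (lt_mem_nhds hpos)]
      with v hv hvpos
    rw [pd_rpow (hv.differentiableAt two_ne_zero) hvpos, mul_assoc]
  have hfy : DifferentiableAt ℝ f y := hf.differentiableAt two_ne_zero
  have hderiv : HasFDerivAt (fun v => p * (f v ^ (p - 1) * pd f j v)) _ y :=
    ((hfy.hasFDerivAt.rpow_const (p := p - 1) (Or.inl hpos.ne')).mul
      (hf.differentiableAt_pd j).hasFDerivAt).const_mul p
  rw [pd, hnear.fderiv_eq, hderiv.fderiv]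
  simp only [pd, _root_.smul_apply, _root_.add_apply, smul_eq_mul, sub_sub, one_add_one_eq_two]
  ring

theorem half_pd_pd_sq_rpow_inv (hf : ContDiffAt ℝ 2 f y) (hpos : 0 < f y) {m : ℝ} (hm : m ≠ 0)
    (i j : Fin n) :
    1 / 2 * pd (fun v => pd (fun w => (f w ^ (1 / m)) ^ 2) j v) i y =
      f y ^ (2 / m - 2) / m ^ 2 *
        (m * f y * pd (fun v => pd f j v) i y + (2 - m) * pd f i y * pd f j y) := by
  have hsq : (fun w => (f w ^ (1 / m)) ^ 2) =ᶠ[𝓝 y] fun w => f w ^ (2 / m) := by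
    filter_upwards [hf.continuousAt.eventually (lt_mem_nhds hpos)] with w hw
    rw [← Real.rpow_natCast, ← Real.rpow_mul hw.le]
    ring_nf
  have hpow : f y ^ (2 / m - 1) = f y ^ (2 / m - 2) * f y := by
    rw [← Real.rpow_add_one hpos.ne']
    ring_nf
  rw [hsq.pd_pd_eq, pd_pd_rpow hf hpos, hpow]
  field_simp

def grad (f : (Fin n → ℝ) → ℝ) (y : Fin n → ℝ) : Fin n → ℝ :=
  fun j => pd f j y

def hessian (f : (Fin n → ℝ) → ℝ) (y : Fin n → ℝ) : Matrix (Fin n) (Fin n) ℝ :=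
  of fun i j => pd (fun v => pd f j v) i y

theorem IsPosHomogeneousOn.grad_dotProduct (hf : IsPosHomogeneousOn f C k) (hy : y ∈ C)
    (hfy : DifferentiableAt ℝ f y) :
    grad f y ⬝ᵥ y = k * f y := by
  rw [dotProduct_comm]
  exact hf.sum_mul_pd hy hfy

theorem IsPosHomogeneousOn.vecMul_hessian (hf : IsPosHomogeneousOn f C k) (hk : 1 ≤ k)
    (hC : IsOpen C) (hcone : ∀ y ∈ C, ∀ t : ℝ, 0 < t → t • y ∈ C) (hfC : ContDiffOn ℝ 2 f C)
    (hy : y ∈ C) :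
    y ᵥ* hessian f y = ((k : ℝ) - 1) • grad f y := by
  obtain ⟨k, rfl⟩ : ∃ l, k = l + 1 := ⟨k - 1, by omega⟩
  have hfy : ContDiffAt ℝ 2 f y := hfC.contDiffAt (hC.mem_nhds hy)
  ext j
  simp only [vecMul, dotProduct, hessian, of_apply, grad, Pi.smul_apply, smul_eq_mul]
  rw [(hf.pd hC hcone (hfC.differentiableOn two_ne_zero) j).sum_mul_pd hy
    (hfy.differentiableAt_pd j)]
  push_cast
  ring

theorem hessian_isSymm (hf : ContDiffAt ℝ 2 f y) : (hessian f y).IsSymm := by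
  ext i j
  simp only [transpose_apply, hessian, of_apply, pd_pd_comm hf]

end Coordinates

theorem Matrix.inv_add_vecMulVec_mul_add_vecMulVec {ι : Type*} [Fintype ι] [DecidableEq ι]
    {H : Matrix ι ι ℝ} (hH : IsUnit H.det) (hsym : H.IsSymm) {a y : ι → ℝ} {m c : ℝ}
    (hm : m - 1 ≠ 0) (hyH : y ᵥ* H = (m - 1) • a) (hay : a ⬝ᵥ y = c) :
    (c • H⁻¹ + ((m - 2) / (m - 1)) • vecMulVec y y) * (c • H + (2 - m) • vecMulVec a a)
      = c ^ 2 • 1 := by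
  have hHy : H *ᵥ y = (m - 1) • a := by rw [← vecMul_transpose, hsym.eq, hyH]
  have hHinv_a : H⁻¹ *ᵥ a = (m - 1)⁻¹ • y := by
    rw [eq_inv_smul_iff₀ hm, ← mulVec_smul, ← hHy, mulVec_mulVec, nonsing_inv_mul _ hH, one_mulVec]
  have hya : y ⬝ᵥ a = c := by rw [dotProduct_comm, hay]
  simp only [add_mul, mul_add, smul_mul_smul_comm]
  rw [nonsing_inv_mul _ hH, vecMulVec_mul_vecMulVec, mul_vecMulVec, vecMulVec_mul, hHinv_a, hyH,
    hya]
  ext i j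
  simp only [add_apply, smul_apply, vecMulVec_apply, Pi.smul_apply, smul_eq_mul, one_apply]
  field_simp
  ring

theorem fundamental_tensor_inverse_mul {ι : Type*} [Fintype ι] [DecidableEq ι]
    {H g : Matrix ι ι ℝ} (hH : IsUnit H.det) (hsym : H.IsSymm) {a y : ι → ℝ} {m α : ℝ}
    (hα : 0 < α) (hm : m ≠ 0) (hm1 : m - 1 ≠ 0) (hyH : y ᵥ* H = (m - 1) • a)
    (hay : a ⬝ᵥ y = m * α)
    (hg : ∀ i j, g i j = α ^ (2 / m - 2) / m ^ 2 * (m * α * H i j + (2 - m) * a i * a j)) :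
    (of fun i j => α ^ (-2 / m) * (m * α * H⁻¹ i j + (m - 2) / (m - 1) * y i * y j)) * g = 1 := by
  have hscalar : α ^ (-2 / m) * (α ^ (2 / m - 2) / m ^ 2) * (m * α) ^ 2 = 1 := by
    rw [← mul_div_assoc, ← Real.rpow_add hα, show -2 / m + (2 / m - 2) = -(2 : ℕ) by ring,
      Real.rpow_neg hα.le, Real.rpow_natCast]
    field_simp
  calc _ = (α ^ (-2 / m) • ((m * α) • H⁻¹ + ((m - 2) / (m - 1)) • vecMulVec y y)) *
        ((α ^ (2 / m - 2) / m ^ 2) • ((m * α) • H + (2 - m) • vecMulVec a a)) := by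
        congr 1 <;> ext i j
        · simp only [of_apply, Matrix.smul_apply, Matrix.add_apply, vecMulVec_apply, smul_eq_mul]
          ring
        · simp only [hg, Matrix.smul_apply, Matrix.add_apply, vecMulVec_apply, smul_eq_mul]
          ring
    _ = 1 := by
        rw [smul_mul_smul_comm, inv_add_vecMulVec_mul_add_vecMulVec hH hsym hm1 hyH hay,
          smul_smul, hscalar, one_smul]

theorem mth_root_fundamental_tensor_and_inverse_general
    (n m : ℕ) (hm : 3 ≤ m)
    (C : Set (Fin n → ℝ)) (hCopen : IsOpen C)
    (hCcone : ∀ y ∈ C, ∀ t : ℝ, 0 < t → t • y ∈ C)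
    (A : (Fin n → ℝ) → ℝ) (hAsm : ContDiffOn ℝ (⊤:ℕ∞) A C)
    (hApos : ∀ y ∈ C, 0 < A y)
    (hAhom : ∀ y ∈ C, ∀ t : ℝ, 0 < t → A (t • y) = t ^ m * A y)
    (AH : (Fin n → ℝ) → Matrix (Fin n) (Fin n) ℝ)
    (hAH : ∀ y i j, AH y i j = pd (fun v => pd A j v) i y)
    (hAHinv : ∀ y ∈ C, IsUnit (AH y).det)
    (F : (Fin n → ℝ) → ℝ) (hF : ∀ y, F y = (A y) ^ ((1:ℝ)/(m:ℝ)))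
    (g : (Fin n → ℝ) → Matrix (Fin n) (Fin n) ℝ)
    (hg : ∀ y i j, g y i j = (1/2) * pd (fun v => pd (fun w => (F w)^2) j v) i y) :
    (∀ y ∈ C, ∀ i j, g y i j =
      ((A y) ^ ((2:ℝ)/(m:ℝ) - 2) / (m:ℝ)^2) *
        ((m:ℝ) * A y * AH y i j + (2 - (m:ℝ)) * pd A i y * pd A j y)) ∧
    (∀ y ∈ C,
      (Matrix.of fun i j => (A y) ^ (-(2:ℝ)/(m:ℝ)) *
          ((m:ℝ) * A y * (AH y)⁻¹ i j
            + (((m:ℝ) - 2)/((m:ℝ) - 1)) * y i * y j)) * g y = 1 ∧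
      g y * (Matrix.of fun i j => (A y) ^ (-(2:ℝ)/(m:ℝ)) *
          ((m:ℝ) * A y * (AH y)⁻¹ i j
            + (((m:ℝ) - 2)/((m:ℝ) - 1)) * y i * y j)) = 1) := by
  have hA2 : ContDiffOn ℝ 2 A C := hAsm.of_le (WithTop.coe_le_coe.mpr le_top)
  have hA2y : ∀ y ∈ C, ContDiffAt ℝ 2 A y := fun y hy => hA2.contDiffAt (hCopen.mem_nhds hy)
  have tensor : ∀ y ∈ C, ∀ i j, g y i j = A y ^ (2 / (m : ℝ) - 2) / (m : ℝ) ^ 2 *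
      (m * A y * AH y i j + (2 - m) * pd A i y * pd A j y) := by
    intro y hy i j
    rw [hg, funext hF, half_pd_pd_sq_rpow_inv (hA2y y hy) (hApos y hy) (by positivity), hAH]
  refine ⟨tensor, fun y hy => ?_⟩
  rw [and_iff_left_of_imp mul_eq_one_comm.mp]
  have hhom : IsPosHomogeneousOn A C m := hAhom
  obtain rfl : AH = hessian A := funext fun y => Matrix.ext (hAH y)
  have hmR : (3 : ℝ) ≤ m := by exact_mod_cast hm
  exact fundamental_tensor_inverse_mul (hAHinv y hy) (hessian_isSymm (hA2y y hy)) (hApos y hy)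
    (by positivity) (by linarith) (hhom.vecMul_hessian (by omega) hCopen hCcone hA2 hy)
    (hhom.grad_dotProduct hy ((hA2y y hy).differentiableAt two_ne_zero)) (tensor y hy)

/-- for an m-homogeneous positive `A` with invertible Hessian on an
open cone, and `F = A^{1/m}`, the fundamental tensor is
`g_{ij} = (A^{(2/m)−2}/m²)[mA·A_{ij} + (2−m)A_iA_j]`, and its inverse is
`g^{ij} = A^{−2/m}[mA·A^{ij} + ((m−2)/(m−1))y^iy^j]`. -/
theorem mth_root_fundamental_tensor_and_inverse
    (n m : ℕ) (hm : 3 ≤ m)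
    (C : Set (Fin n → ℝ)) (hCopen : IsOpen C) (hCne : ∀ y ∈ C, y ≠ (0 : Fin n → ℝ))
    (hCcone : ∀ y ∈ C, ∀ t : ℝ, 0 < t → t • y ∈ C)
    (A : (Fin n → ℝ) → ℝ) (hAsm : ContDiffOn ℝ (⊤:ℕ∞) A C)
    (hApos : ∀ y ∈ C, 0 < A y)
    (hAhom : ∀ y ∈ C, ∀ t : ℝ, 0 < t → A (t • y) = t ^ m * A y)
    (AH : (Fin n → ℝ) → Matrix (Fin n) (Fin n) ℝ)
    (hAH : ∀ y i j, AH y i j = pd (fun v => pd A j v) i y)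
    (hAHinv : ∀ y ∈ C, IsUnit (AH y).det)
    (F : (Fin n → ℝ) → ℝ) (hF : ∀ y, F y = (A y) ^ ((1:ℝ)/(m:ℝ)))
    (g : (Fin n → ℝ) → Matrix (Fin n) (Fin n) ℝ)
    (hg : ∀ y i j, g y i j = (1/2) * pd (fun v => pd (fun w => (F w)^2) j v) i y) :
    (∀ y ∈ C, ∀ i j, g y i j =
      ((A y) ^ ((2:ℝ)/(m:ℝ) - 2) / (m:ℝ)^2) *
        ((m:ℝ) * A y * AH y i j + (2 - (m:ℝ)) * pd A i y * pd A j y)) ∧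
    (∀ y ∈ C,
      (Matrix.of fun i j => (A y) ^ (-(2:ℝ)/(m:ℝ)) *
          ((m:ℝ) * A y * (AH y)⁻¹ i j
            + (((m:ℝ) - 2)/((m:ℝ) - 1)) * y i * y j)) * g y = 1 ∧
      g y * (Matrix.of fun i j => (A y) ^ (-(2:ℝ)/(m:ℝ)) *
          ((m:ℝ) * A y * (AH y)⁻¹ i j
            + (((m:ℝ) - 2)/((m:ℝ) - 1)) * y i * y j)) = 1) :=
  mth_root_fundamental_tensor_and_inverse_general n m hm C hCopen hCcone A hAsm hApos hAhom AH hAH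
    hAHinv F hF g hg
end
end

section
/- Let F be a positive smooth function on U × (ℝⁿ∖{0}), where U ⊆ ℝⁿ is open, which is positively 1-homogeneous in y: F(x,λy) = λF(x,y) for all λ > 0. Then F satisfies the Rapcsák equation ∂²F/∂x^k∂y^l · y^k = ∂F/∂x^l for all l and all (x,y) with y ≠ 0 if and only if F satisfies the Hamel equation ∂²F/∂x^k∂y^l = ∂²F/∂x^l∂y^k for all k, l and all (x,y) with y ≠ 0. -/
open scoped BigOperators
open Matrix

noncomputable section

/-!
Regard `F` as a function `f = uncurry F` on `E × E`, so that `x`-derivatives are derivatives in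
directions `(v, 0)` and `y`-derivatives in directions `(0, w)`, and write
`B(v, w) = D²f (v, 0) (0, w)` for the mixed Hessian; Hamel's equation says that `B` is symmetric
and Rapcsák's that `B(y, w) = Df (w, 0)`.

Differentiating Euler's identity `Df (0, y) = f` in `x` gives `B(w, y) = Df (w, 0)`, so Hamel
implies Rapcsák. Conversely, differentiating Rapcsák's equation in `y` in a direction `v` gives
`D³f (0, v) (y, 0) (0, w) + B(v, w) = B(w, v)`. The third derivative is symmetric, so the first
term is symmetric in `v, w`, while `B(w, v) - B(v, w)` is antisymmetric: both vanish.
-/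

open ContinuousLinearMap Filter Topology

section Calculus

variable {E F G : Type*} [NormedAddCommGroup E] [NormedSpace ℝ E] [NormedAddCommGroup F]
  [NormedSpace ℝ F] [NormedAddCommGroup G] [NormedSpace ℝ G]

lemma fderiv_comp_prodMk_left_apply {f : E × F → G} {x : E} {y : F}
    (hf : DifferentiableAt ℝ f (x, y)) (v : E) :
    fderiv ℝ (fun x' => f (x', y)) x v = fderiv ℝ f (x, y) (v, 0) := by
  have hpath : HasFDerivAt (fun x' : E => (x', y)) ((ContinuousLinearMap.id ℝ E).prod 0) x :=
    (hasFDerivAt_id x).prodMk (hasFDerivAt_const y x)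
  have h : HasFDerivAt (fun x' => f (x', y))
      ((fderiv ℝ f (x, y)).comp ((ContinuousLinearMap.id ℝ E).prod 0)) x :=
    hf.hasFDerivAt.comp x hpath
  simp [h.fderiv]

lemma fderiv_comp_prodMk_right_apply {f : E × F → G} {x : E} {y : F}
    (hf : DifferentiableAt ℝ f (x, y)) (w : F) :
    fderiv ℝ (fun y' => f (x, y')) y w = fderiv ℝ f (x, y) (0, w) := by
  have hpath : HasFDerivAt (fun y' : F => (x, y'))
      ((0 : F →L[ℝ] E).prod (ContinuousLinearMap.id ℝ F)) y :=
    (hasFDerivAt_const x y).prodMk (hasFDerivAt_id y)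
  have h : HasFDerivAt (fun y' => f (x, y'))
      ((fderiv ℝ f (x, y)).comp ((0 : F →L[ℝ] E).prod (ContinuousLinearMap.id ℝ F))) y :=
    hf.hasFDerivAt.comp y hpath
  simp [h.fderiv]

lemma fderiv_clm_apply_const_apply {c : E → F →L[ℝ] G} {x : E} (hc : DifferentiableAt ℝ c x)
    (u : F) (v : E) : fderiv ℝ (fun x' => c x' u) x v = fderiv ℝ c x v u := by
  simp [fderiv_clm_apply hc (differentiableAt_const u)]

lemma fderiv_fderiv_fderiv_comm {f : E → G} {x : E} (hf : ContDiffAt ℝ 3 f x) (u v w : E) :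
    fderiv ℝ (fderiv ℝ (fderiv ℝ f)) x u v w
      = fderiv ℝ (fderiv ℝ (fderiv ℝ f)) x w v u := by
  have swap_outer : ∀ a b c : E, fderiv ℝ (fderiv ℝ (fderiv ℝ f)) x a b c
      = fderiv ℝ (fderiv ℝ (fderiv ℝ f)) x b a c := fun a b c => by
    rw [(hf.fderiv_right (m := 2) (by norm_num)).isSymmSndFDerivAt (by simp) a b]
  have hH : DifferentiableAt ℝ (fderiv ℝ (fderiv ℝ f)) x :=
    ((hf.fderiv_right (m := 2) (by norm_num)).fderiv_right (m := 1) (by norm_num)).differentiableAt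
      (by norm_num)
  have swap_inner : ∀ a b c : E, fderiv ℝ (fderiv ℝ (fderiv ℝ f)) x a b c
      = fderiv ℝ (fderiv ℝ (fderiv ℝ f)) x a c b := fun a b c => by
    have hsymm : (fun y => fderiv ℝ (fderiv ℝ f) y b c) =ᶠ[𝓝 x]
        fun y => fderiv ℝ (fderiv ℝ f) y c b := by
      filter_upwards [hf.eventually (by simp)] with y hy
      have hy2 : IsSymmSndFDerivAt ℝ f y := hy.isSymmSndFDerivAt (by simp; norm_num)
      exact hy2 b c
    have key := congrArg (fun L : E →L[ℝ] G => L a) (hsymm.fderiv_eq (𝕜 := ℝ))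
    rwa [fderiv_clm_apply_const_apply (F := E) (c := fun y => fderiv ℝ (fderiv ℝ f) y b)
        (hH.clm_apply (differentiableAt_const _)),
      fderiv_clm_apply_const_apply (F := E) (c := fun y => fderiv ℝ (fderiv ℝ f) y c)
        (hH.clm_apply (differentiableAt_const _)),
      fderiv_clm_apply_const_apply hH, fderiv_clm_apply_const_apply hH] at key
  rw [swap_outer, swap_inner, swap_outer]

lemma euler_identity_of_homogeneous {f : E × F → G} {x : E} {y : F}
    (hf : DifferentiableAt ℝ f (x, y))
    (hhom : ∀ t : ℝ, 0 < t → f (x, t • y) = t • f (x, y)) :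
    fderiv ℝ f (x, y) (0, y) = f (x, y) := by
  have hray : HasDerivAt (fun t : ℝ => f (x, t • y)) (fderiv ℝ f (x, y) (0, y)) 1 := by
    have hcurve : HasDerivAt (fun t : ℝ => (x, t • y)) (0, y) 1 :=
      (hasDerivAt_const 1 x).prodMk (by simpa using (hasDerivAt_id (1 : ℝ)).smul_const y)
    have hf1 : HasFDerivAt f (fderiv ℝ f (x, y)) (x, (1 : ℝ) • y) := by
      simpa using hf.hasFDerivAt
    exact hf1.comp_hasDerivAt 1 hcurve
  have hlin : HasDerivAt (fun t : ℝ => f (x, t • y)) (f (x, y)) 1 := by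
    have hid := (hasDerivAt_id (1 : ℝ)).smul_const (f (x, y))
    rw [one_smul] at hid
    refine hid.congr_of_eventuallyEq ?_
    filter_upwards [eventually_gt_nhds zero_lt_one] with t ht
    exact hhom t ht
  exact hray.unique hlin

lemma fderiv_euler_identity_fst {f : E × F → G} {p : E × F}
    (hf : DifferentiableAt ℝ (fderiv ℝ f) p)
    (heuler : ∀ᶠ q in 𝓝 p, fderiv ℝ f q (0, q.2) = f q) (v : E) :
    fderiv ℝ (fderiv ℝ f) p (v, 0) (0, p.2) = fderiv ℝ f p (v, 0) := by
  have hembed : HasFDerivAt (fun q : E × F => ((0 : E), q.2))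
      ((0 : E × F →L[ℝ] E).prod (snd ℝ E F)) p :=
    ((0 : E × F →L[ℝ] E).prod (snd ℝ E F)).hasFDerivAt
  have hderiv := (hf.hasFDerivAt.clm_apply hembed).fderiv.symm.trans
    (EventuallyEq.fderiv_eq (𝕜 := ℝ) heuler)
  simpa [Prod.mk_zero_zero] using congrArg (fun L : E × F →L[ℝ] G => L (v, 0)) hderiv

lemma fderiv_rapcsak_snd {f : E × E → G} {p : E × E} (hf : ContDiffAt ℝ 3 f p) {w : E}
    (hw : ∀ᶠ q in 𝓝 p, fderiv ℝ (fderiv ℝ f) q (q.2, 0) (0, w) = fderiv ℝ f q (w, 0))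
    (v : E) :
    fderiv ℝ (fderiv ℝ (fderiv ℝ f)) p (0, v) (p.2, 0) (0, w)
        + fderiv ℝ (fderiv ℝ f) p (v, 0) (0, w)
      = fderiv ℝ (fderiv ℝ f) p (w, 0) (0, v) := by
  have hDf : DifferentiableAt ℝ (fderiv ℝ f) p :=
    (hf.fderiv_right (m := 2) (by norm_num)).differentiableAt (by norm_num)
  have hD2f : DifferentiableAt ℝ (fderiv ℝ (fderiv ℝ f)) p :=
    ((hf.fderiv_right (m := 2) (by norm_num)).fderiv_right (m := 1) (by norm_num)).differentiableAt
      (by norm_num)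
  have hembed : HasFDerivAt (fun q : E × E => (q.2, (0 : E)))
      ((snd ℝ E E).prod (0 : E × E →L[ℝ] E)) p :=
    ((snd ℝ E E).prod (0 : E × E →L[ℝ] E)).hasFDerivAt
  have hlhs := hD2f.hasFDerivAt.clm_apply hembed
  have key := congrArg (fun L : E × E →L[ℝ] G => L (0, v))
    (EventuallyEq.fderiv_eq (𝕜 := ℝ) hw)
  rw [fderiv_clm_apply_const_apply hlhs.differentiableAt, hlhs.fderiv,
    fderiv_clm_apply_const_apply hDf, hf.isSymmSndFDerivAt (by simp; norm_num)] at key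
  simpa [add_comm] using key

lemma hamel_of_rapcsak {f : E × E → G} {p : E × E} (hf : ContDiffAt ℝ 3 f p) {v w : E}
    (hv : ∀ᶠ q in 𝓝 p, fderiv ℝ (fderiv ℝ f) q (q.2, 0) (0, v) = fderiv ℝ f q (v, 0))
    (hw : ∀ᶠ q in 𝓝 p, fderiv ℝ (fderiv ℝ f) q (q.2, 0) (0, w) = fderiv ℝ f q (w, 0)) :
    fderiv ℝ (fderiv ℝ f) p (v, 0) (0, w) = fderiv ℝ (fderiv ℝ f) p (w, 0) (0, v) := by
  have hvw := fderiv_rapcsak_snd hf hw v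
  have hwv := fderiv_rapcsak_snd hf hv w
  rw [fderiv_fderiv_fderiv_comm hf] at hwv
  linear_combination (norm := module) (1 / 2 : ℝ) • hvw - (1 / 2 : ℝ) • hwv

end Calculus

section Coordinates

lemma sum_apply_single_mul {ι : Type*} [Fintype ι] [DecidableEq ι]
    (L : (ι → ℝ) →L[ℝ] ℝ) (y : ι → ℝ) : ∑ k, L (Pi.single k 1) * y k = L y := by
  conv_rhs => rw [← Finset.univ_sum_single y, map_sum]
  refine Finset.sum_congr rfl fun k _ => ?_
  rw [mul_comm, ← smul_eq_mul, ← map_smul, ← Pi.single_smul, smul_eq_mul, mul_one]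

variable {n : ℕ} {F : (Fin n → ℝ) → (Fin n → ℝ) → ℝ} {x y : Fin n → ℝ}

lemma pd_eq_fderiv_uncurry (hF : DifferentiableAt ℝ (Function.uncurry F) (x, y)) (l : Fin n) :
    pd (fun x' => F x' y) l x = fderiv ℝ (Function.uncurry F) (x, y) (Pi.single l 1, 0) :=
  fderiv_comp_prodMk_left_apply (f := Function.uncurry F) hF _

lemma pd_pd_eq_fderiv_fderiv_uncurry (hF : ContDiffAt ℝ 2 (Function.uncurry F) (x, y))
    (k l : Fin n) :
    pd (fun x' => pd (F x') l y) k x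
      = fderiv ℝ (fderiv ℝ (Function.uncurry F)) (x, y) (Pi.single k 1, 0)
          (0, Pi.single l 1) := by
  have hDF : DifferentiableAt ℝ (fderiv ℝ (Function.uncurry F)) (x, y) :=
    (hF.fderiv_right (m := 1) (by norm_num)).differentiableAt (by norm_num)
  have hnear : (fun x' => pd (F x') l y)
      =ᶠ[𝓝 x] fun x' => fderiv ℝ (Function.uncurry F) (x', y) (0, Pi.single l 1) := by
    have hpath : Tendsto (fun x' => (x', y)) (𝓝 x) (𝓝 (x, y)) :=
      (continuous_id.prodMk continuous_const).tendsto x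
    filter_upwards [hpath.eventually (hF.eventually (by simp))] with x' hx'
    exact fderiv_comp_prodMk_right_apply (f := Function.uncurry F)
      (hx'.differentiableAt (by norm_num)) _
  rw [pd, hnear.fderiv_eq, fderiv_comp_prodMk_left_apply
    (f := fun q => fderiv ℝ (Function.uncurry F) q (0, Pi.single l 1))
    (hDF.clm_apply (differentiableAt_const _)), fderiv_clm_apply_const_apply hDF]

lemma sum_pd_pd_mul_eq_fderiv_fderiv_uncurry (hF : ContDiffAt ℝ 2 (Function.uncurry F) (x, y))
    (l : Fin n) :
    ∑ k, pd (fun x' => pd (F x') l y) k x * y k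
      = fderiv ℝ (fderiv ℝ (Function.uncurry F)) (x, y) (y, 0) (0, Pi.single l 1) := by
  simp_rw [pd_pd_eq_fderiv_fderiv_uncurry hF]
  exact sum_apply_single_mul
    (((fderiv ℝ (fderiv ℝ (Function.uncurry F)) (x, y)).comp (inl ℝ _ _)).flip
      (0, Pi.single l 1)) y

lemma rapcsak_of_hamel (hF : ContDiffAt ℝ 2 (Function.uncurry F) (x, y))
    (heuler : ∀ᶠ q in 𝓝 (x, y),
      fderiv ℝ (Function.uncurry F) q (0, q.2) = Function.uncurry F q)
    {l : Fin n}
    (hhamel : ∀ k, pd (fun x' => pd (F x') l y) k x = pd (fun x' => pd (F x') k y) l x) :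
    ∑ k, pd (fun x' => pd (F x') l y) k x * y k = pd (fun x' => F x' y) l x := by
  have hDF : DifferentiableAt ℝ (fderiv ℝ (Function.uncurry F)) (x, y) :=
    (hF.fderiv_right (m := 1) (by norm_num)).differentiableAt (by norm_num)
  calc ∑ k, pd (fun x' => pd (F x') l y) k x * y k
      = ∑ k, fderiv ℝ (fderiv ℝ (Function.uncurry F)) (x, y) (Pi.single l 1, 0)
          (0, Pi.single k 1) * y k := by
        simp_rw [hhamel, pd_pd_eq_fderiv_fderiv_uncurry hF]
    _ = fderiv ℝ (fderiv ℝ (Function.uncurry F)) (x, y) (Pi.single l 1, 0) (0, y) :=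
        sum_apply_single_mul
          ((fderiv ℝ (fderiv ℝ (Function.uncurry F)) (x, y) (Pi.single l 1, 0)).comp
            (inr ℝ _ _)) y
    _ = fderiv ℝ (Function.uncurry F) (x, y) (Pi.single l 1, 0) :=
        fderiv_euler_identity_fst hDF heuler _
    _ = pd (fun x' => F x' y) l x :=
        (pd_eq_fderiv_uncurry (hF.differentiableAt (by norm_num)) l).symm

end Coordinates

theorem rapcsak_iff_hamel_general
    (n : ℕ)
    (U : Set (Fin n → ℝ)) (hU : IsOpen U)
    (F : (Fin n → ℝ) → (Fin n → ℝ) → ℝ)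
    (hFsm : ContDiffOn ℝ (⊤:ℕ∞) (fun p : (Fin n → ℝ) × (Fin n → ℝ) => F p.1 p.2)
      (U ×ˢ {y : Fin n → ℝ | y ≠ 0}))
    (hFhom : ∀ x ∈ U, ∀ y : Fin n → ℝ, ∀ t : ℝ, 0 < t → F x (t • y) = t * F x y) :
    (∀ x ∈ U, ∀ y : Fin n → ℝ, y ≠ 0 → ∀ l,
        (∑ k, pd (fun x' => pd (F x') l y) k x * y k) = pd (fun x' => F x' y) l x)
    ↔ (∀ x ∈ U, ∀ y : Fin n → ℝ, y ≠ 0 → ∀ k l,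
        pd (fun x' => pd (F x') l y) k x = pd (fun x' => pd (F x') k y) l x) := by
  set Ω := U ×ˢ {y : Fin n → ℝ | y ≠ 0}
  have hΩ : IsOpen Ω := hU.prod isOpen_ne
  have hnhds : ∀ x ∈ U, ∀ y : Fin n → ℝ, y ≠ 0 → Ω ∈ 𝓝 (x, y) :=
    fun x hx y hy => hΩ.mem_nhds ⟨hx, hy⟩
  have hsmooth : ∀ p ∈ Ω, ContDiffAt ℝ 3 (Function.uncurry F) p :=
    fun p hp => (hFsm.contDiffAt (hΩ.mem_nhds hp)).of_le (WithTop.coe_le_coe.mpr le_top)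
  have hsmooth₂ : ∀ p ∈ Ω, ContDiffAt ℝ 2 (Function.uncurry F) p :=
    fun p hp => (hsmooth p hp).of_le (by norm_num)
  constructor
  · intro hrapcsak x hx y hy k l
    have hrapcsak' : ∀ l, ∀ᶠ q in 𝓝 (x, y),
        fderiv ℝ (fderiv ℝ (Function.uncurry F)) q (q.2, 0) (0, Pi.single l 1)
          = fderiv ℝ (Function.uncurry F) q (Pi.single l 1, 0) := fun l => by
      filter_upwards [hnhds x hx y hy] with ⟨x', y'⟩ ⟨hx', hy'⟩
      rw [← sum_pd_pd_mul_eq_fderiv_fderiv_uncurry (hsmooth₂ (x', y') ⟨hx', hy'⟩),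
        ← pd_eq_fderiv_uncurry ((hsmooth (x', y') ⟨hx', hy'⟩).differentiableAt (by norm_num))]
      exact hrapcsak x' hx' y' hy' l
    rw [pd_pd_eq_fderiv_fderiv_uncurry (hsmooth₂ (x, y) ⟨hx, hy⟩),
      pd_pd_eq_fderiv_fderiv_uncurry (hsmooth₂ (x, y) ⟨hx, hy⟩)]
    exact hamel_of_rapcsak (hsmooth (x, y) ⟨hx, hy⟩) (hrapcsak' k) (hrapcsak' l)
  · intro hhamel x hx y hy l
    have heuler : ∀ᶠ q in 𝓝 (x, y),
        fderiv ℝ (Function.uncurry F) q (0, q.2) = Function.uncurry F q := by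
      filter_upwards [hnhds x hx y hy] with ⟨x', y'⟩ ⟨hx', hy'⟩
      exact euler_identity_of_homogeneous
        ((hsmooth (x', y') ⟨hx', hy'⟩).differentiableAt (by norm_num)) (hFhom x' hx' y')
    exact rapcsak_of_hamel (hsmooth₂ (x, y) ⟨hx, hy⟩) heuler fun k => hhamel x hx y hy k l

/-- for a positive, smooth, positively 1-homogeneous `F`, the
Rapcsák equation `∂²F/∂x^k∂y^l · y^k = ∂F/∂x^l` is equivalent to the Hamel
equation `∂²F/∂x^k∂y^l = ∂²F/∂x^l∂y^k`. -/
theorem rapcsak_iff_hamel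
    (n : ℕ) (hn : 2 ≤ n)
    (U : Set (Fin n → ℝ)) (hU : IsOpen U)
    (F : (Fin n → ℝ) → (Fin n → ℝ) → ℝ)
    (hFsm : ContDiffOn ℝ (⊤:ℕ∞) (fun p : (Fin n → ℝ) × (Fin n → ℝ) => F p.1 p.2)
      (U ×ˢ {y : Fin n → ℝ | y ≠ 0}))
    (hFpos : ∀ x ∈ U, ∀ y : Fin n → ℝ, y ≠ 0 → 0 < F x y)
    (hFhom : ∀ x ∈ U, ∀ y : Fin n → ℝ, ∀ t : ℝ, 0 < t → F x (t • y) = t * F x y) :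
    (∀ x ∈ U, ∀ y : Fin n → ℝ, y ≠ 0 → ∀ l,
        (∑ k, pd (fun x' => pd (F x') l y) k x * y k) = pd (fun x' => F x' y) l x)
    ↔ (∀ x ∈ U, ∀ y : Fin n → ℝ, y ≠ 0 → ∀ k l,
        pd (fun x' => pd (F x') l y) k x = pd (fun x' => pd (F x') k y) l x) :=
  rapcsak_iff_hamel_general n U hU F hFsm hFhom
end
end
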